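/- arXiv:2104.01515 — 2 statements merged into one kernel-verified Lean document; each statement's English description precedes it below -/
import Mathlib

section
/- Let a, b, c, d be real numbers with a > 0 and 0 < d < b ≤ c, and set K₃(a,b,c,d) = [((b+c)/2)^{2((b+c)/2)²} / (b^{b²} c^{c²})] · [(a+(b+c)/2−d)^{2(a+(b+c)/2−d)²} / ((a+b−d)^{(a+b−d)²} (a+c−d)^{(a+c−d)²})] · [((b−d)^{(b−d)²} (c−d)^{(c−d)²}) / ((b+c)/2−d)^{2((b+c)/2−d)²}] · [((a+b)^{(a+b)²} (a+c)^{(a+c)²}) / (a+(b+c)/2)^{2(a+(b+c)/2)²}]. Then K₃(a,b,c,d) ≤ 1, with equality if and only if b = c. -/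
set_option linter.unusedVariables false


/-- The constant `K₁(a,b,c,d)` from Theorem 2.3. -/
noncomputable def K1 (a b c d : ℝ) : ℝ :=
  ((a + d) / (a * d)) ^ ((1:ℝ)/8) *
  (b * c * (a + b - d) * (a + c - d) / ((a + b) * (a + c) * (b - d) * (c - d))) ^ ((1:ℝ)/12) *
  ((a + (b + c)/2) * ((b + c)/2 - d) / (((b + c)/2) * (a + (b + c)/2 - d))) ^ ((1:ℝ)/24)

/-- The constant `K₂(a,b,c,d)` from Theorem 2.3. -/
noncomputable def K2 (a b c d : ℝ) : ℝ :=
  a ^ a * d ^ d * ((b + c)/2) ^ ((b + c)/2) *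
    (a + (b + c)/2 - d) ^ (a + (b + c)/2 - d) /
  ((a + d) ^ (a + d) * (a + (b + c)/2) ^ (a + (b + c)/2) *
    ((b + c)/2 - d) ^ ((b + c)/2 - d))

/-- The constant `K₃(a,b,c,d)` from Theorem 2.3. -/
noncomputable def K3 (a b c d : ℝ) : ℝ :=
  (((b + c)/2) ^ (2 * ((b + c)/2)^2) / (b ^ (b^2) * c ^ (c^2))) *
  ((a + (b + c)/2 - d) ^ (2 * (a + (b + c)/2 - d)^2) /
    ((a + b - d) ^ ((a + b - d)^2) * (a + c - d) ^ ((a + c - d)^2))) *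
  (((b - d) ^ ((b - d)^2) * (c - d) ^ ((c - d)^2)) /
    ((b + c)/2 - d) ^ (2 * ((b + c)/2 - d)^2)) *
  (((a + b) ^ ((a + b)^2) * (a + c) ^ ((a + c)^2)) /
    (a + (b + c)/2) ^ (2 * (a + (b + c)/2)^2))

open Real Set Filter Topology

/-- Auxiliary function: `g(t) = 2 h(m+t) - h(b+t) - h(c+t)` with `h(x) = x² log x`. -/
noncomputable def gfun (b c t : ℝ) : ℝ :=
  2 * (((b + c)/2 + t) ^ 2 * Real.log ((b + c)/2 + t))
    - (b + t) ^ 2 * Real.log (b + t) - (c + t) ^ 2 * Real.log (c + t)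

/-- First derivative of `gfun`. -/
noncomputable def gfun1 (b c t : ℝ) : ℝ :=
  2 * (2 * ((b + c)/2 + t) * Real.log ((b + c)/2 + t) + ((b + c)/2 + t))
    - (2 * (b + t) * Real.log (b + t) + (b + t))
    - (2 * (c + t) * Real.log (c + t) + (c + t))

lemma hd1 (k x : ℝ) (h : 0 < k + x) :
    HasDerivAt (fun t => (k + t) ^ 2 * Real.log (k + t))
      (2 * (k + x) * Real.log (k + x) + (k + x)) x := by
  have h0 : HasDerivAt (fun t : ℝ => k + t) 1 x := (hasDerivAt_id x).const_add k
  have h1 : HasDerivAt (fun u : ℝ => u ^ 2 * Real.log u)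
      (2 * (k + x) * Real.log (k + x) + (k + x) ^ 2 * (1 / (k + x))) (k + x) := by
    have := ((hasDerivAt_pow 2 (k + x)).mul (Real.hasDerivAt_log h.ne'))
    refine this.congr_deriv ?_
    ring_nf
  have := h1.comp x h0
  refine this.congr_deriv ?_
  field_simp

lemma hd2 (k x : ℝ) (h : 0 < k + x) :
    HasDerivAt (fun t => 2 * (k + t) * Real.log (k + t) + (k + t))
      (2 * Real.log (k + x) + 3) x := by
  have h0 : HasDerivAt (fun t : ℝ => k + t) 1 x := (hasDerivAt_id x).const_add k
  have h1 : HasDerivAt (fun u : ℝ => 2 * u * Real.log u + u)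
      (2 * Real.log (k + x) + 2 * (k + x) * (1 / (k + x)) + 1) (k + x) := by
    have hm : HasDerivAt (fun u : ℝ => 2 * u) 2 (k + x) := by
      simpa using (hasDerivAt_id (k + x)).const_mul 2
    have := (hm.mul (Real.hasDerivAt_log h.ne')).add (hasDerivAt_id (k + x))
    refine this.congr_deriv ?_
    field_simp
  have := h1.comp x h0
  refine this.congr_deriv ?_
  field_simp
  ring

lemma pos_m (b c x : ℝ) (hb : 0 < b) (hbc : b ≤ c) (hx : -b < x) : 0 < (b + c)/2 + x := by
  linarith

lemma hasDerivAt_gfun (b c x : ℝ) (hb : 0 < b) (hbc : b ≤ c) (hx : -b < x) :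
    HasDerivAt (gfun b c) (gfun1 b c x) x := by
  have hbm : 0 < b + x := by linarith
  have hcm : 0 < c + x := by linarith
  have hmm : 0 < (b + c)/2 + x := by linarith
  have := (((hd1 ((b + c)/2) x hmm).const_mul 2).sub (hd1 b x hbm)).sub (hd1 c x hcm)
  exact this

lemma hasDerivAt_gfun1 (b c x : ℝ) (hb : 0 < b) (hbc : b ≤ c) (hx : -b < x) :
    HasDerivAt (gfun1 b c)
      (2 * (2 * Real.log ((b + c)/2 + x) + 3) - (2 * Real.log (b + x) + 3)
        - (2 * Real.log (c + x) + 3)) x := by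
  have hbm : 0 < b + x := by linarith
  have hcm : 0 < c + x := by linarith
  have hmm : 0 < (b + c)/2 + x := by linarith
  exact (((hd2 ((b + c)/2) x hmm).const_mul 2).sub (hd2 b x hbm)).sub (hd2 c x hcm)

lemma gfun_strictConvexOn (b c : ℝ) (hb : 0 < b) (hlt : b < c) :
    StrictConvexOn ℝ (Set.Ioi (-b)) (gfun b c) := by
  have hbc : b ≤ c := hlt.le
  apply strictConvexOn_of_deriv2_pos (convex_Ioi _)
  · intro t ht
    exact (hasDerivAt_gfun b c t hb hbc ht).continuousAt.continuousWithinAt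
  · intro x hx
    rw [interior_Ioi] at hx
    have h2 : deriv^[2] (gfun b c) x = deriv (deriv (gfun b c)) x := rfl
    have heq : deriv (gfun b c) =ᶠ[𝓝 x] gfun1 b c := by
      filter_upwards [isOpen_Ioi.mem_nhds hx] with t ht
      exact (hasDerivAt_gfun b c t hb hbc ht).deriv
    rw [h2, heq.deriv_eq, (hasDerivAt_gfun1 b c x hb hbc hx).deriv]
    have hbm : 0 < b + x := by simp only [Set.mem_Ioi] at hx; linarith
    have hcm : 0 < c + x := by simp only [Set.mem_Ioi] at hx; linarith
    have hmm : 0 < (b + c)/2 + x := by simp only [Set.mem_Ioi] at hx; linarith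
    have hprod : (b + x) * (c + x) < ((b + c)/2 + x) ^ 2 := by
      have h0 : (0:ℝ) < ((c - b)/2) ^ 2 := by
        have : (0:ℝ) < (c - b)/2 := by linarith
        positivity
      nlinarith
    have hlog : Real.log ((b + x) * (c + x)) < Real.log (((b + c)/2 + x) ^ 2) :=
      Real.log_lt_log (by positivity) hprod
    rw [Real.log_mul hbm.ne' hcm.ne', Real.log_pow] at hlog
    push_cast at hlog
    linarith

lemma gsum_lt (a b c d : ℝ) (ha : 0 < a) (hd : 0 < d) (hdb : d < b) (hlt : b < c) :
    gfun b c 0 + gfun b c (a - d) < gfun b c (-d) + gfun b c a := by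
  have hb : 0 < b := hd.trans hdb
  have hconv := gfun_strictConvexOn b c hb hlt
  have had : 0 < a + d := by linarith
  have hmem1 : (-d : ℝ) ∈ Set.Ioi (-b) := by simp only [Set.mem_Ioi]; linarith
  have hmem2 : a ∈ Set.Ioi (-b) := by simp only [Set.mem_Ioi]; linarith
  have hne : (-d : ℝ) ≠ a := by intro h; linarith [h]
  have hw1 : 0 < a / (a + d) := by positivity
  have hw2 : 0 < d / (a + d) := by positivity
  have hsum : a / (a + d) + d / (a + d) = 1 := by field_simp
  have hsum' : d / (a + d) + a / (a + d) = 1 := by field_simp; ring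
  have h1 := hconv.2 hmem1 hmem2 hne hw1 hw2 hsum
  have h2 := hconv.2 hmem1 hmem2 hne hw2 hw1 hsum'
  simp only [smul_eq_mul] at h1 h2
  have e1 : a / (a + d) * (-d) + d / (a + d) * a = 0 := by field_simp; ring
  have e2 : d / (a + d) * (-d) + a / (a + d) * a = a - d := by
    field_simp; ring
  rw [e1] at h1
  rw [e2] at h2
  have key : a / (a + d) * gfun b c (-d) + d / (a + d) * gfun b c a
      + (d / (a + d) * gfun b c (-d) + a / (a + d) * gfun b c a)
      = (a / (a + d) + d / (a + d)) * (gfun b c (-d) + gfun b c a) := by ring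
  rw [hsum, one_mul] at key
  linarith

lemma K3_eq_exp (a b c d : ℝ) (ha : 0 < a) (hd : 0 < d) (hdb : d < b) (hbc : b ≤ c) :
    K3 a b c d
      = Real.exp (gfun b c 0 + gfun b c (a - d) - gfun b c (-d) - gfun b c a) := by
  have hb : 0 < b := hd.trans hdb
  have hc : 0 < c := hb.trans_le hbc
  have hm : 0 < (b + c)/2 := by linarith
  have habd : 0 < a + b - d := by linarith
  have hacd : 0 < a + c - d := by linarith
  have hbd : 0 < b - d := by linarith
  have hcd : 0 < c - d := by linarith
  have hmd : 0 < (b + c)/2 - d := by linarith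
  have hamd : 0 < a + (b + c)/2 - d := by linarith
  have hab : 0 < a + b := by linarith
  have hac : 0 < a + c := by linarith
  have ham : 0 < a + (b + c)/2 := by linarith
  rw [K3]
  simp only [Real.rpow_def_of_pos hm, Real.rpow_def_of_pos hb, Real.rpow_def_of_pos hc,
    Real.rpow_def_of_pos hamd, Real.rpow_def_of_pos habd, Real.rpow_def_of_pos hacd,
    Real.rpow_def_of_pos hbd, Real.rpow_def_of_pos hcd, Real.rpow_def_of_pos hmd,
    Real.rpow_def_of_pos hab, Real.rpow_def_of_pos hac, Real.rpow_def_of_pos ham]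
  simp only [← Real.exp_add, ← Real.exp_sub]
  rw [Real.exp_eq_exp]
  simp only [gfun]
  ring_nf

/-- `K₃(a,b,c,d) ≤ 1`, with equality if and only if `b = c`. -/
theorem K3_le_one (a b c d : ℝ) (ha : 0 < a) (hd : 0 < d) (hdb : d < b) (hbc : b ≤ c) :
    K3 a b c d ≤ 1 ∧ (K3 a b c d = 1 ↔ b = c) := by
  rcases eq_or_lt_of_le hbc with h | h
  · subst h
    have hg : ∀ t, gfun b b t = 0 := by
      intro t
      rw [gfun, show (b + b)/2 = b by ring]
      ring
    have hK : K3 a b b d = 1 := by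
      rw [K3_eq_exp a b b d ha hd hdb le_rfl]
      simp [hg]
    exact ⟨hK.le, by simp [hK]⟩
  · have hlt := gsum_lt a b c d ha hd hdb h
    have hK : K3 a b c d < 1 := by
      rw [K3_eq_exp a b c d ha hd hdb hbc]
      exact Real.exp_lt_one_iff.mpr (by linarith)
    exact ⟨hK.le, ⟨fun he => absurd he hK.ne, fun he => absurd he h.ne⟩⟩
end

section
/- Let a, c, d be real numbers with a > 0 and 0 < d < c. Then a^a · d^d · c^c · (a+c−d)^{a+c−d} < (a+d)^{a+d} · (a+c)^{a+c} · (c−d)^{c−d}; that is, K₂(a,c,c,d) < 1, where K₂(a,c,c,d) = a^a d^d c^c (a+c−d)^{a+c−d} / ((a+d)^{a+d} (a+c)^{a+c} (c−d)^{c−d}). -/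
open Real

/-- Superadditivity of `x ↦ x * log x` (strict). -/
lemma mul_log_superadd {a d : ℝ} (ha : 0 < a) (hd : 0 < d) :
    a * Real.log a + d * Real.log d < (a + d) * Real.log (a + d) := by
  have h1 : a * Real.log a < a * Real.log (a + d) :=
    mul_lt_mul_of_pos_left (Real.log_lt_log ha (by linarith)) ha
  have h2 : d * Real.log d < d * Real.log (a + d) :=
    mul_lt_mul_of_pos_left (Real.log_lt_log hd (by linarith)) hd
  nlinarith

/-- Interior pair vs extreme pair for the convex function `x ↦ x * log x`. -/
lemma mul_log_inner_le {a c d : ℝ} (ha : 0 < a) (hd : 0 < d) (hdc : d < c) :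
    c * Real.log c + (a + c - d) * Real.log (a + c - d) ≤
      (c - d) * Real.log (c - d) + (a + c) * Real.log (a + c) := by
  have had : (0:ℝ) < a + d := by linarith
  set t : ℝ := a / (a + d) with ht
  have ht0 : 0 ≤ t := div_nonneg ha.le had.le
  have hs0 : 0 ≤ 1 - t := by
    have : t ≤ 1 := by rw [ht, div_le_one had]; linarith
    linarith
  have hsum : t + (1 - t) = 1 := by ring
  have hx : (c - d) ∈ Set.Ici (0:ℝ) := by simp; linarith
  have hy : (a + c) ∈ Set.Ici (0:ℝ) := by simp; linarith
  have hcv := Real.convexOn_mul_log.2 hx hy ht0 hs0 hsum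
  have hcv2 := Real.convexOn_mul_log.2 hy hx ht0 hs0 hsum
  have e1 : t * (c - d) + (1 - t) * (a + c) = c := by
    field_simp [ht]; linarith [show t * (a + d) = a by rw [ht]; exact div_mul_cancel₀ a had.ne']
  have e2 : t * (a + c) + (1 - t) * (c - d) = a + c - d := by
    field_simp [ht]; linarith [show t * (a + d) = a by rw [ht]; exact div_mul_cancel₀ a had.ne']
  simp only [smul_eq_mul] at hcv hcv2
  rw [e1] at hcv
  rw [e2] at hcv2
  nlinarith [hcv, hcv2]

/-- `K₂(a,c,c,d) < 1`:
`a^a d^d c^c (a+c-d)^(a+c-d) < (a+d)^(a+d) (a+c)^(a+c) (c-d)^(c-d)`. -/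
theorem K2_lt_one (a c d : ℝ) (ha : 0 < a) (hd : 0 < d) (hdc : d < c) :
    a ^ a * d ^ d * c ^ c * (a + c - d) ^ (a + c - d) <
      (a + d) ^ (a + d) * (a + c) ^ (a + c) * (c - d) ^ (c - d) := by
  have hc : 0 < c := hd.trans hdc
  have hcd : 0 < c - d := by linarith
  have had : 0 < a + d := by linarith
  have hac : 0 < a + c := by linarith
  have hacd : 0 < a + c - d := by linarith
  rw [Real.rpow_def_of_pos ha, Real.rpow_def_of_pos hd, Real.rpow_def_of_pos hc,
    Real.rpow_def_of_pos hacd, Real.rpow_def_of_pos had, Real.rpow_def_of_pos hac,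
    Real.rpow_def_of_pos hcd, ← Real.exp_add, ← Real.exp_add, ← Real.exp_add, ← Real.exp_add, ← Real.exp_add]
  apply Real.exp_lt_exp.2
  have h1 := mul_log_superadd ha hd
  have h2 := mul_log_inner_le ha hd hdc
  nlinarith [h1, h2]
end
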